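/- Let r ≥ 1, δ ≥ 1, t ≥ 1, k ≥ 1, set n = t(r + δ - 1), and let P_1, …, P_t be a partition of {1,…,n} into blocks each of size r + δ - 1. Suppose S ⊆ {1,…,n} contains no subset K of size k with |K ∩ P_i| ≤ r for all 1 ≤ i ≤ t. Then |S| ≤ k - 1 + (⌈k/r⌉ - 1)(δ - 1). -/

import Mathlib

/-- Ceiling division: `cdiv k r = ⌈k/r⌉` for `r ≥ 1`. -/
def cdiv (a b : ℕ) : ℕ := (a + b - 1) / b

/-!
Put `f i = |S ∩ P_i|`. Keeping at most `r` elements of `S` in each block gives a set that meets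
every block in at most `r` points, so by hypothesis it has fewer than `k` elements:
`∑ min (f i) r ≤ k - 1`. A block with `f i > r` contributes `r` to this sum, so there are at most
`(k - 1) / r = ⌈k/r⌉ - 1` such blocks, and each of them holds at most `δ - 1` further elements of `S`.
-/

open Finset Function

namespace Finset

variable {ι α : Type*} [Fintype ι] [DecidableEq α] {P : ι → Finset α}

theorem card_eq_sum_card_inter_of_biUnion_eq_univ [Fintype α] (hP : Pairwise (Disjoint on P))
    (hcover : univ.biUnion P = univ) (S : Finset α) : #S = ∑ i, #(S ∩ P i) := by
  conv_lhs => rw [← inter_univ S, ← hcover, inter_biUnion]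
  exact card_biUnion fun i _ j _ hij => (hP hij).mono inter_subset_right inter_subset_right

theorem biUnion_inter_eq_of_subset (hP : Pairwise (Disjoint on P)) {A : ι → Finset α}
    (hA : ∀ i, A i ⊆ P i) (i : ι) : univ.biUnion A ∩ P i = A i := by
  ext x
  simp only [mem_inter, mem_biUnion, mem_univ, true_and]
  refine ⟨fun ⟨⟨j, hxj⟩, hxi⟩ => ?_, fun hx => ⟨⟨i, hx⟩, hA i hx⟩⟩
  obtain rfl | hji := eq_or_ne j i
  · exact hxj
  · exact absurd hxi (disjoint_left.1 (hP hji) (hA j hxj))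

theorem exists_subset_card_eq_forall_card_inter_le (hP : Pairwise (Disjoint on P))
    {S : Finset α} {k r : ℕ} (h : k ≤ ∑ i, min #(S ∩ P i) r) :
    ∃ K ⊆ S, #K = k ∧ ∀ i, #(K ∩ P i) ≤ r := by
  choose A hAS hAcard using fun i => exists_subset_card_eq (min_le_left #(S ∩ P i) r)
  have hAP i : A i ⊆ P i := (hAS i).trans inter_subset_right
  have hcard : #(univ.biUnion A) = ∑ i, min #(S ∩ P i) r := by
    rw [card_biUnion fun i _ j _ hij => (hP hij).mono (hAP i) (hAP j)]
    exact sum_congr rfl fun i _ => hAcard i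
  obtain ⟨K, hKA, hKcard⟩ := exists_subset_card_eq (hcard ▸ h)
  refine ⟨K, fun x hx => ?_, hKcard, fun i => ?_⟩
  · obtain ⟨i, -, hxi⟩ := mem_biUnion.1 (hKA hx)
    exact inter_subset_left (hAS i hxi)
  · calc #(K ∩ P i) ≤ #(univ.biUnion A ∩ P i) := card_le_card (inter_subset_inter_right hKA)
      _ = min #(S ∩ P i) r := by rw [biUnion_inter_eq_of_subset hP hAP, hAcard]
      _ ≤ r := min_le_right _ _

end Finset

section Truncation

variable {ι : Type*} [Fintype ι] (f : ι → ℕ) (r : ℕ)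

theorem card_filter_lt_mul_le_sum_min : #{i | r < f i} * r ≤ ∑ i, min (f i) r := by
  rw [← smul_eq_mul]
  refine (card_nsmul_le_sum _ _ r fun i hi => ?_).trans (sum_le_sum_of_subset (subset_univ _))
  exact le_min (mem_filter.1 hi).2.le le_rfl

theorem sum_tsub_le_card_filter_lt_mul {d : ℕ} (hf : ∀ i, f i ≤ r + d) :
    ∑ i, (f i - r) ≤ #{i | r < f i} * d := by
  rw [card_eq_sum_ones, sum_mul, sum_filter]
  refine sum_le_sum fun i _ => ?_
  have := hf i
  split_ifs <;> omega

theorem sum_le_of_sum_min_le (hr : 0 < r) {d m : ℕ} (hf : ∀ i, f i ≤ r + d)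
    (hm : ∑ i, min (f i) r ≤ m) : ∑ i, f i ≤ m + m / r * d := by
  have hT : #{i | r < f i} ≤ m / r :=
    (Nat.le_div_iff_mul_le hr).2 ((card_filter_lt_mul_le_sum_min f r).trans hm)
  calc ∑ i, f i = ∑ i, min (f i) r + ∑ i, (f i - r) := by
        rw [← sum_add_distrib]
        exact sum_congr rfl fun i _ => by omega
    _ ≤ m + #{i | r < f i} * d := add_le_add hm (sum_tsub_le_card_filter_lt_mul f r hf)
    _ ≤ m + m / r * d := by gcongr

end Truncation

theorem cdiv_sub_one {k r : ℕ} (hr : 0 < r) : cdiv k r - 1 = (k - 1) / r := by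
  rcases Nat.eq_zero_or_pos k with rfl | hk
  · simp [cdiv, Nat.div_eq_of_lt (Nat.sub_one_lt_of_lt hr)]
  · rw [cdiv, show k + r - 1 = k - 1 + r by omega, Nat.add_div_right _ hr, Nat.add_sub_cancel]

theorem stmt_15_general {n t r δ k : ℕ} (hr : 1 ≤ r)
    (P : Fin t → Finset (Fin n))
    (hdisj : ∀ i j, i ≠ j → Disjoint (P i) (P j))
    (hcover : Finset.univ.biUnion P = Finset.univ)
    (hcard : ∀ i, (P i).card = r + δ - 1)
    (S : Finset (Fin n))
    (hS : ∀ K ⊆ S, K.card = k → ∃ i, r < (K ∩ P i).card) :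
    S.card ≤ k - 1 + (cdiv k r - 1) * (δ - 1) := by
  have hP : Pairwise (Disjoint on P) := fun i j => hdisj i j
  have hmin : ∑ i, min #(S ∩ P i) r ≤ k - 1 := by
    by_contra! hlt
    obtain ⟨K, hKS, hKcard, hK⟩ :=
      exists_subset_card_eq_forall_card_inter_le hP (show k ≤ ∑ i, min #(S ∩ P i) r by omega)
    obtain ⟨i, hi⟩ := hS K hKS hKcard
    exact (hK i).not_gt hi
  have hblock i : #(S ∩ P i) ≤ r + (δ - 1) :=
    (card_le_card inter_subset_right).trans (by rw [hcard i]; omega)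
  rw [card_eq_sum_card_inter_of_biUnion_eq_univ hP hcover, cdiv_sub_one hr]
  exact sum_le_of_sum_min_le _ r hr hblock hmin

/-- Let `n = t(r + δ - 1)` and let `P_1, …, P_t` be a partition of
`{1, …, n}` into blocks of size `r + δ - 1`. If `S` contains no subset `K` of size `k` with
`|K ∩ P_i| ≤ r` for all `i`, then `|S| ≤ k - 1 + (⌈k/r⌉ - 1)(δ - 1)`. -/
theorem stmt_15 {n t r δ k : ℕ} (hr : 1 ≤ r) (hδ : 1 ≤ δ) (ht : 1 ≤ t) (hk : 1 ≤ k)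
    (hn : n = t * (r + δ - 1))
    (P : Fin t → Finset (Fin n))
    (hdisj : ∀ i j, i ≠ j → Disjoint (P i) (P j))
    (hcover : Finset.univ.biUnion P = Finset.univ)
    (hcard : ∀ i, (P i).card = r + δ - 1)
    (S : Finset (Fin n))
    (hS : ∀ K ⊆ S, K.card = k → ∃ i, r < (K ∩ P i).card) :
    S.card ≤ k - 1 + (cdiv k r - 1) * (δ - 1) :=
  stmt_15_general hr P hdisj hcover hcard S hS
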